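/- Let C be a (1,≤2)-identifying code of the king grid. If a frame F contains a corner element c of C and two non-corner elements of C lying on a side of F that does not contain c, then F contains at least six elements of C (i.e., F is a 6^+-frame). -/

import Mathlib

open Filter

/-- Closed neighbourhood of a vertex in the king grid: `v` together with all vertices
differing from `v` by at most `1` in each coordinate. -/
def kingN (v : ℤ × ℤ) : Set (ℤ × ℤ) := {u | |u.1 - v.1| ≤ 1 ∧ |u.2 - v.2| ≤ 1}

/-- Closed neighbourhood of a set of vertices. -/
def kingNS (X : Set (ℤ × ℤ)) : Set (ℤ × ℤ) := ⋃ v ∈ X, kingN v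

/-- `C ⊆ ℤ²` is a `(1, ≤ ℓ)`-identifying code in the king grid. -/
def IsIdCode (ℓ : ℕ) (C : Set (ℤ × ℤ)) : Prop :=
  ∀ X Y : Set (ℤ × ℤ), X.Finite → Y.Finite → X.ncard ≤ ℓ → Y.ncard ≤ ℓ → X ≠ Y →
    kingNS X ∩ C ≠ kingNS Y ∩ C

/-- The square `Q_n = {(x,y) : |x| ≤ n, |y| ≤ n}`. -/
noncomputable def Qn (n : ℕ) : Finset (ℤ × ℤ) := Finset.Icc (-(n : ℤ), -(n : ℤ)) ((n : ℤ), (n : ℤ))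

/-- The density of a code `C ⊆ ℤ²`. -/
noncomputable def density (C : Set (ℤ × ℤ)) : ℝ :=
  Filter.atTop.limsup fun n : ℕ =>
    ((C ∩ (Qn n : Set (ℤ × ℤ))).ncard : ℝ) / ((Qn n).card : ℝ)

/-- `n(X, C)`: the average number of codewords of `C` in the translates of `X`. -/
noncomputable def avgCount (X C : Set (ℤ × ℤ)) : ℝ :=
  Filter.atTop.limsup fun n : ℕ =>
    (∑ v ∈ Qn n, ((C ∩ ((fun u => v + u) '' X)).ncard : ℝ)) / ((Qn n).card : ℝ)

/-- The frame at `v`: the 12-element set `{v+(a,b) : a,b ∈ {0,1,2,3}, a ∈ {0,3} or b ∈ {0,3}}`. -/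
noncomputable def frame (v : ℤ × ℤ) : Finset (ℤ × ℤ) :=
  (((Finset.Icc (0 : ℤ) 3) ×ˢ (Finset.Icc (0 : ℤ) 3)).filter
      fun p => p.1 = 0 ∨ p.1 = 3 ∨ p.2 = 0 ∨ p.2 = 3).image fun p => v + p

/-- The number of codewords of `C` in the frame at `v`. -/
noncomputable def frameCount (C : Set (ℤ × ℤ)) (v : ℤ × ℤ) : ℕ :=
  (C ∩ (frame v : Set (ℤ × ℤ))).ncard

/-- The four corners of the frame at `v`. -/
def corners (v : ℤ × ℤ) : Finset (ℤ × ℤ) :=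
  {v + (0, 0), v + (3, 0), v + (0, 3), v + (3, 3)}

/-- The four sides of the frame at `v`. -/
def sides (v : ℤ × ℤ) : Finset (Finset (ℤ × ℤ)) :=
  { {v + (0, 0), v + (1, 0), v + (2, 0), v + (3, 0)},
    {v + (0, 3), v + (1, 3), v + (2, 3), v + (3, 3)},
    {v + (0, 0), v + (0, 1), v + (0, 2), v + (0, 3)},
    {v + (3, 0), v + (3, 1), v + (3, 2), v + (3, 3)} }

/-- Offsets at (frame-lattice) distance at most 2, i.e. the 2-ball of the origin. -/
noncomputable def ball2 : Finset (ℤ × ℤ) := Finset.Icc (-2, -2) (2, 2)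

/-- Offsets at (frame-lattice) distance exactly 1. -/
noncomputable def sphere1 : Finset (ℤ × ℤ) := (Finset.Icc (-1, -1) (1, 1)).erase (0, 0)

/-- Offsets at (frame-lattice) distance exactly 2. -/
noncomputable def sphere2 : Finset (ℤ × ℤ) := Finset.Icc (-2, -2) (2, 2) \ Finset.Icc (-1, -1) (1, 1)

/-- The number of offsets `d ∈ S` satisfying the property `P`. -/
noncomputable def countFrames (S : Finset (ℤ × ℤ)) (P : ℤ × ℤ → Prop) : ℕ :=
  {d | d ∈ S ∧ P d}.ncard

/-- The four offsets `(2,0), (−2,0), (0,2), (0,−2)`. -/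
def offsets4 : Finset (ℤ × ℤ) := {(2, 0), (-2, 0), (0, 2), (0, -2)}

/-- A 4-benefactor: a `6⁺`-frame one of whose four translates by `(±2,0), (0,±2)`
is a 4-frame. -/
def Benefactor4 (C : Set (ℤ × ℤ)) (v : ℤ × ℤ) : Prop :=
  6 ≤ frameCount C v ∧ ∃ d ∈ offsets4, frameCount C (v + d) = 4

/-- A 1-poor frame: a 5-frame having at most one 6-frame in its 2-ball. -/
def OnePoor (C : Set (ℤ × ℤ)) (v : ℤ × ℤ) : Prop :=
  frameCount C v = 5 ∧ countFrames ball2 (fun d => frameCount C (v + d) = 6) ≤ 1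

/-- A 2-poor frame: a 5-frame with no `6⁺`-frame at distance 1 and at most two 6-frames
at distance 2. -/
def TwoPoor (C : Set (ℤ × ℤ)) (v : ℤ × ℤ) : Prop :=
  frameCount C v = 5 ∧ (∀ d ∈ sphere1, frameCount C (v + d) < 6) ∧
    countFrames sphere2 (fun d => frameCount C (v + d) = 6) ≤ 2

/-- A 1-poor-benefactor: a 6-frame at distance 1 from some 1-poor frame which has at most
two 1-poor frames in its 2-ball, each of them at distance 1, has at least two `6⁺`-frames
at distance 2, and is not a 4-benefactor. -/
def OnePoorBenefactor (C : Set (ℤ × ℤ)) (w : ℤ × ℤ) : Prop :=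
  frameCount C w = 6 ∧ (∃ e ∈ sphere1, OnePoor C (w + e)) ∧
    countFrames ball2 (fun e => OnePoor C (w + e)) ≤ 2 ∧
    (∀ e ∈ ball2, OnePoor C (w + e) → e ∈ sphere1) ∧
    2 ≤ countFrames sphere2 (fun e => 6 ≤ frameCount C (w + e)) ∧
    ¬ Benefactor4 C w

/-!
If `x, y` are horizontally or vertically adjacent interior cells of a frame, the code separates
`{x}` from `{x, y}`, so it meets `N[y] \ N[x]`: a side of the frame minus one of its corners.
The eight symmetries of the square act simply transitively on the pairs (side, corner off that
side), so we may take `S` to be the bottom side and `c` the top left corner. Then the left side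
without its top corner, the top side without its left corner and the right side without its top
corner each contain a codeword, and these three triples, `c` and the two middle cells of `S`
partition the frame.
-/
lemma IsIdCode.exists_mem_kingN_diff {ℓ : ℕ} {C : Set (ℤ × ℤ)} (hC : IsIdCode ℓ C) (hℓ : 2 ≤ ℓ)
    {x y : ℤ × ℤ} (hxy : x ≠ y) : ∃ w ∈ C, w ∈ kingN y ∧ w ∉ kingN x := by
  by_contra! h
  refine hC {x} {x, y} (Set.finite_singleton x) (Set.toFinite _) (by simp; omega)
    (by rw [Set.ncard_pair hxy]; exact hℓ) ?_ ?_
  · intro hXY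
    exact hxy (Set.mem_singleton_iff.1 (hXY ▸ Set.mem_insert_of_mem x rfl)).symm
  · ext w
    simp only [kingNS, Set.mem_inter_iff, Set.mem_iUnion, Set.mem_singleton_iff,
      Set.mem_insert_iff, exists_prop, exists_eq_or_imp, exists_eq_left]
    exact ⟨fun hw => ⟨Or.inl hw.1, hw.2⟩, fun hw => ⟨hw.1.elim id (h w hw.2), hw.2⟩⟩

lemma mem_kingN {u v : ℤ × ℤ} : u ∈ kingN v ↔ |u.1 - v.1| ≤ 1 ∧ |u.2 - v.2| ≤ 1 := Iff.rfl

lemma mem_frame {u v : ℤ × ℤ} : u ∈ frame v ↔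
    ((0 ≤ u.1 - v.1 ∧ u.1 - v.1 ≤ 3) ∧ 0 ≤ u.2 - v.2 ∧ u.2 - v.2 ≤ 3) ∧
      (u.1 - v.1 = 0 ∨ u.1 - v.1 = 3 ∨ u.2 - v.2 = 0 ∨ u.2 - v.2 = 3) := by
  simp only [frame, Finset.mem_image, Finset.mem_filter, Finset.mem_product, Finset.mem_Icc]
  constructor
  · rintro ⟨p, hp, rfl⟩
    simpa using hp
  · exact fun h => ⟨u - v, h, add_sub_cancel v u⟩

lemma card_le_frameCount {C : Set (ℤ × ℤ)} {v : ℤ × ℤ} {T : Finset (ℤ × ℤ)}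
    (hT : ∀ u ∈ T, u ∈ C ∧ u ∈ frame v) : T.card ≤ frameCount C v := by
  rw [frameCount, ← Set.ncard_coe_finset]
  exact Set.ncard_le_ncard (fun u hu => hT u hu) ((frame v).finite_toSet.inter_of_right C)

lemma add_mem_frame_iff {v o : ℤ × ℤ} : v + o ∈ frame v ↔ o ∈ frame 0 := by
  simp [mem_frame]

def IsKingAut (ψ : ℤ × ℤ ≃ ℤ × ℤ) : Prop :=
  ∀ x y, ψ x ∈ kingN (ψ y) ↔ x ∈ kingN y

lemma IsKingAut.trans {ψ φ : ℤ × ℤ ≃ ℤ × ℤ} (hψ : IsKingAut ψ) (hφ : IsKingAut φ) :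
    IsKingAut (ψ.trans φ) := fun x y => (hφ (ψ x) (ψ y)).trans (hψ x y)

lemma isKingAut_addLeft (v : ℤ × ℤ) : IsKingAut (Equiv.addLeft v) := by
  intro x y
  simp [mem_kingN]

lemma IsIdCode.exists_apply_mem_kingN_diff {ℓ : ℕ} {C : Set (ℤ × ℤ)} (hC : IsIdCode ℓ C)
    (hℓ : 2 ≤ ℓ) {ψ : ℤ × ℤ ≃ ℤ × ℤ} (hψ : IsKingAut ψ) {x y : ℤ × ℤ} (hxy : x ≠ y) :
    ∃ o, ψ o ∈ C ∧ o ∈ kingN y ∧ o ∉ kingN x := by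
  obtain ⟨w, hwC, hwy, hwx⟩ := hC.exists_mem_kingN_diff hℓ (ψ.injective.ne hxy)
  rw [← ψ.apply_symm_apply w, hψ] at hwy hwx
  exact ⟨ψ.symm w, by simpa using hwC, hwy, hwx⟩

def frameSym (swap flipX flipY : Bool) : ℤ × ℤ ≃ ℤ × ℤ :=
  (if swap then Equiv.prodComm ℤ ℤ else Equiv.refl _).trans
    ((if flipX then Equiv.subLeft 3 else Equiv.refl ℤ).prodCongr
      (if flipY then Equiv.subLeft 3 else Equiv.refl ℤ))

lemma isKingAut_frameSym (swap flipX flipY : Bool) : IsKingAut (frameSym swap flipX flipY) := by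
  intro x y
  cases swap <;> cases flipX <;> cases flipY <;>
    simp [frameSym, mem_kingN, abs_sub_comm, and_comm]

lemma frameSym_mem_frame_zero (swap flipX flipY : Bool) {o : ℤ × ℤ} (ho : o ∈ frame 0) :
    frameSym swap flipX flipY o ∈ frame 0 := by
  rw [mem_frame] at ho ⊢
  cases swap <;> cases flipX <;> cases flipY <;> simp [frameSym] at ho ⊢ <;> omega

lemma exists_frameSym_of_corner_notMem_side {v c : ℤ × ℤ} {S : Finset (ℤ × ℤ)}
    (hc : c ∈ corners v) (hS : S ∈ sides v) (hcS : c ∉ S) :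
    ∃ swap flipX flipY : Bool, c = v + frameSym swap flipX flipY (0, 3) ∧
      ∀ p ∈ S, p ∉ corners v →
        p = v + frameSym swap flipX flipY (1, 0) ∨ p = v + frameSym swap flipX flipY (2, 0) := by
  simp only [sides, corners, Finset.mem_insert, Finset.mem_singleton] at hS hc
  rcases hS with rfl | rfl | rfl | rfl <;> rcases hc with rfl | rfl | rfl | rfl <;>
    simp [Bool.exists_bool, frameSym, corners] at hcS ⊢

lemma six_le_frameCount_of_isKingAut {ℓ : ℕ} {C : Set (ℤ × ℤ)} (hC : IsIdCode ℓ C) (hℓ : 2 ≤ ℓ)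
    {v : ℤ × ℤ} {ψ : ℤ × ℤ ≃ ℤ × ℤ} (hψ : IsKingAut ψ) (hframe : ∀ o ∈ frame 0, ψ o ∈ frame v)
    (h₁ : ψ (1, 0) ∈ C) (h₂ : ψ (2, 0) ∈ C) (hc : ψ (0, 3) ∈ C) : 6 ≤ frameCount C v := by
  obtain ⟨l, hlC, hl⟩ := hC.exists_apply_mem_kingN_diff hℓ hψ (x := (2, 1)) (y := (1, 1)) (by simp)
  obtain ⟨t, htC, ht⟩ := hC.exists_apply_mem_kingN_diff hℓ hψ (x := (2, 1)) (y := (2, 2)) (by simp)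
  obtain ⟨r, hrC, hr⟩ := hC.exists_apply_mem_kingN_diff hℓ hψ (x := (1, 1)) (y := (2, 1)) (by simp)
  simp only [mem_kingN, abs_le] at hl ht hr
  set T : Finset (ℤ × ℤ) := {(1, 0), (2, 0), (0, 3), l, t, r}
  have hT : T ⊆ frame 0 := by
    intro o ho
    simp only [T, Finset.mem_insert, Finset.mem_singleton] at ho
    rw [mem_frame]
    rcases ho with rfl | rfl | rfl | rfl | rfl | rfl <;>
      simp only [Prod.fst_zero, Prod.snd_zero] <;> omega
  have hcard : T.card = 6 := by
    simp only [T]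
    repeat rw [Finset.card_insert_of_notMem (by simp [Prod.ext_iff]; omega)]
    rfl
  calc 6 = (T.map ψ.toEmbedding).card := by rw [Finset.card_map, hcard]
    _ ≤ frameCount C v := card_le_frameCount fun u hu => by
      obtain ⟨o, ho, rfl⟩ := Finset.mem_map.1 hu
      refine ⟨?_, hframe o (hT ho)⟩
      simp only [T, Finset.mem_insert, Finset.mem_singleton] at ho
      rcases ho with rfl | rfl | rfl | rfl | rfl | rfl <;> assumption

/-- If a frame contains a corner codeword `c` and two non-corner codewords on a side
not containing `c`, then it is a `6⁺`-frame. -/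
theorem corner_and_two_noncorner_codewords (C : Set (ℤ × ℤ)) (hC : IsIdCode 2 C)
    (v c p₁ p₂ : ℤ × ℤ)
    (hc : c ∈ C) (hcc : c ∈ corners v)
    (h₁ : p₁ ∈ C) (h₂ : p₂ ∈ C) (hne : p₁ ≠ p₂)
    (hnc₁ : p₁ ∉ corners v) (hnc₂ : p₂ ∉ corners v)
    (S : Finset (ℤ × ℤ)) (hS : S ∈ sides v) (hp₁ : p₁ ∈ S) (hp₂ : p₂ ∈ S) (hcS : c ∉ S) :
    6 ≤ frameCount C v := by
  obtain ⟨swap, flipX, flipY, rfl, hmid⟩ := exists_frameSym_of_corner_notMem_side hcc hS hcS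
  have hψ : IsKingAut ((frameSym swap flipX flipY).trans (Equiv.addLeft v)) :=
    (isKingAut_frameSym swap flipX flipY).trans (isKingAut_addLeft v)
  have hmidC :
      v + frameSym swap flipX flipY (1, 0) ∈ C ∧ v + frameSym swap flipX flipY (2, 0) ∈ C := by
    rcases hmid p₁ hp₁ hnc₁ with rfl | rfl <;> rcases hmid p₂ hp₂ hnc₂ with rfl | rfl
    exacts [absurd rfl hne, ⟨h₁, h₂⟩, ⟨h₂, h₁⟩, absurd rfl hne]
  exact six_le_frameCount_of_isKingAut hC le_rfl hψ
    (fun o ho => add_mem_frame_iff.2 (frameSym_mem_frame_zero swap flipX flipY ho))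
    hmidC.1 hmidC.2 hc
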